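/- arXiv:2502.06678 — 2 statements merged into one kernel-verified Lean document; each statement's English description precedes it below -/
import Mathlib

section
/- Let m₁ > 0, ε > 0 with m₂ ∈ (m₁ − ε/2, m₁), and consider the two-arm instance where arm 1 is uniform on [0, 2m₁] and arm 2 has a point mass of 1/2 at m₂ and 1/2 at 2m₁. Then sup {Δ ∈ [0, 1/2] | Q₂⁺(1/2 − Δ) ≥ Q₁(1/2 + Δ) − ε/2} ≥ min{1/2, (m₂ − (m₁ − ε/2))/(2m₁)} > 0, where Q₂⁺(p) = sup {x | F₂(x) ≤ p} and Q₁(p) = inf {x | F₁(x) ≥ p}. -/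
theorem stmt_16 (m₁ m₂ ε : ℝ) (hm₁ : 0 < m₁) (hε : 0 < ε)
    (hm₂ : m₂ ∈ Set.Ioo (m₁ - ε/2) m₁) :
    let F₁ : ℝ → ℝ := fun x => if x < 0 then 0 else if x ≤ 2 * m₁ then x / (2 * m₁) else 1
    let F₂ : ℝ → ℝ := fun x => if x < m₂ then 0 else if x < 2 * m₁ then 1/2 else 1
    let Q₁ : ℝ → ℝ := fun p => sInf {x : ℝ | p ≤ F₁ x}
    let Q₂p : ℝ → ℝ := fun p => sSup {x : ℝ | F₂ x ≤ p}
    min (1/2) ((m₂ - (m₁ - ε/2)) / (2 * m₁)) ≤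
      sSup {Δ : ℝ | Δ ∈ Set.Icc (0:ℝ) (1/2) ∧ Q₁ (1/2 + Δ) - ε/2 ≤ Q₂p (1/2 - Δ)} ∧
    0 < min (1/2) ((m₂ - (m₁ - ε/2)) / (2 * m₁)) := by
  intro F₁ F₂ Q₁ Q₂p
  have h2m₁ : 0 < 2 * m₁ := by linarith
  set δ := min (1/2) ((m₂ - (m₁ - ε/2)) / (2 * m₁)) with hδ
  have hδpos : 0 < δ := by
    apply lt_min (by norm_num)
    apply div_pos (by linarith [hm₂.1]) h2m₁
  have hδhalf : δ ≤ 1/2 := min_le_left _ _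
  have hδ2 : δ ≤ (m₂ - (m₁ - ε/2)) / (2 * m₁) := min_le_right _ _
  have hδ2' : 2 * m₁ * δ ≤ m₂ - (m₁ - ε/2) := by
    have := (le_div_iff₀ h2m₁).mp hδ2
    linarith
  refine ⟨?_, hδpos⟩
  -- compute Q₂p (1/2 - δ) = m₂
  have hS₂ : {x : ℝ | F₂ x ≤ 1/2 - δ} = Set.Iio m₂ := by
    ext x
    simp only [Set.mem_setOf_eq, Set.mem_Iio, F₂]
    constructor
    · intro h
      by_contra hx
      push_neg at hx
      rw [if_neg (not_lt.mpr hx)] at h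
      split_ifs at h <;> linarith
    · intro h
      rw [if_pos h]; linarith
  have hQ₂ : Q₂p (1/2 - δ) = m₂ := by
    show sSup {x : ℝ | F₂ x ≤ 1/2 - δ} = m₂
    rw [hS₂, csSup_Iio]
  -- compute Q₁ (1/2 + δ) = 2 * m₁ * (1/2 + δ)
  have hS₁ : {x : ℝ | 1/2 + δ ≤ F₁ x} = Set.Ici (2 * m₁ * (1/2 + δ)) := by
    ext x
    simp only [Set.mem_setOf_eq, Set.mem_Ici, F₁]
    constructor
    · intro h
      split_ifs at h with h1 h2
      · linarith
      · calc 2 * m₁ * (1/2 + δ) ≤ 2 * m₁ * (x / (2 * m₁)) := by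
              apply mul_le_mul_of_nonneg_left h (le_of_lt h2m₁)
            _ = x := by field_simp
      · push_neg at h2
        nlinarith
    · intro h
      have hx0 : ¬ x < 0 := by nlinarith
      rw [if_neg hx0]
      split_ifs with h2
      · rw [le_div_iff₀ h2m₁]
        linarith [mul_comm (2 * m₁) (1/2 + δ)]
      · linarith
  have hQ₁ : Q₁ (1/2 + δ) = 2 * m₁ * (1/2 + δ) := by
    show sInf {x : ℝ | 1/2 + δ ≤ F₁ x} = _
    rw [hS₁, csInf_Ici]
  apply le_csSup
  · exact ⟨1/2, fun x hx => hx.1.2⟩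
  · refine ⟨⟨le_of_lt hδpos, hδhalf⟩, ?_⟩
    rw [hQ₁, hQ₂]
    nlinarith
end

section
/- Let F be a CDF, q ∈ (0,1), and η > 0, and suppose G is the CDF obtained from F by moving probability mass η from the region strictly above Q_F(q) to a point at or below Q_F(q − 2η) (i.e., G(x) = F(x) + η for x in [Q_F(q−2η), Q_F(q)) and G(x) = F(x) elsewhere, assuming 2η < q). Then the q-quantile of G satisfies Q_G(q) ≤ Q_F(q − η). -/
theorem stmt_18 (F : ℝ → ℝ) (q η : ℝ) (hF : Monotone F)
    (hq : q ∈ Set.Ioo (0:ℝ) 1) (hη : 0 < η) (h2η : 2 * η < q)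
    (hne : {x : ℝ | q ≤ F x}.Nonempty)
    (hbd : BddBelow {x : ℝ | q - 2 * η ≤ F x}) :
    let Q : (ℝ → ℝ) → ℝ → ℝ := fun G p => sInf {x : ℝ | p ≤ G x}
    let G : ℝ → ℝ := fun x =>
      if x ∈ Set.Ico (Q F (q - 2 * η)) (Q F q) then F x + η else F x
    Q G q ≤ Q F (q - η) := by
  intro Q G
  have hT : {x : ℝ | q - η ≤ F x} ⊆ {x | q - 2*η ≤ F x} := fun x hx => by
    simp only [Set.mem_setOf_eq] at *; linarith
  have hTne : {x : ℝ | q - η ≤ F x}.Nonempty := hne.mono fun x hx => by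
    simp only [Set.mem_setOf_eq] at *; linarith
  have hSbd : BddBelow {x : ℝ | q ≤ G x} := hbd.mono (fun x hx => by
    simp only [Set.mem_setOf_eq, G] at hx ⊢
    split_ifs at hx with h
    · linarith
    · linarith)
  show sInf {x : ℝ | q ≤ G x} ≤ sInf {x : ℝ | q - η ≤ F x}
  apply le_of_forall_gt_imp_ge_of_dense
  intro x hx
  by_cases hxb : x ≤ Q F q
  · obtain ⟨y, hy1, hy2⟩ := exists_between hx
    obtain ⟨t, ht, htly⟩ := exists_lt_of_csInf_lt hTne hy1
    have hyT : q - η ≤ F y := le_trans ht (hF htly.le)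
    have hya : Q F (q - 2*η) ≤ y := csInf_le hbd (hT hyT)
    have hyb : y < Q F q := lt_of_lt_of_le hy2 hxb
    have hGy : q ≤ G y := by
      simp only [G, Set.mem_Ico]
      rw [if_pos ⟨by simpa [mul_comm] using hya, hyb⟩]; linarith
    exact le_trans (csInf_le hSbd hGy) hy2.le
  · push_neg at hxb
    obtain ⟨s, hs, hslt⟩ := exists_lt_of_csInf_lt hne hxb
    have hFx : q ≤ F x := le_trans hs (hF hslt.le)
    have hGx : q ≤ G x := by
      simp only [G]; split_ifs with h
      · linarith
      · exact hFx
    exact csInf_le hSbd hGx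
end
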